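/- arXiv:2510.03210 — 6 statements merged into one kernel-verified Lean document; each statement's English description precedes it below -/
import Mathlib

section
/- Let Γ be a group and define maps s₁, s₂, s₃ on Γ⁴ by s₁(a,b,c,d) = (ab⁻¹a, a, c, d), s₂(a,b,c,d) = (a, bc⁻¹b, b, d), s₃(a,b,c,d) = (a, b, cd⁻¹c, c). Then these maps satisfy the braid relations: s₁s₂s₁ = s₂s₁s₂, s₂s₃s₂ = s₃s₂s₃, and s₁s₃ = s₃s₁ (as maps Γ⁴ → Γ⁴). -/
/-!
Writing `a ▷ b = a b⁻¹ a`, each `sᵢ` replaces the adjacent pair `(xᵢ, xᵢ₊₁)` by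
`(xᵢ ▷ xᵢ₊₁, xᵢ)`. For any binary operation, such moves on disjoint pairs commute, and
`sᵢ sᵢ₊₁ sᵢ = sᵢ₊₁ sᵢ sᵢ₊₁` amounts to `(a ▷ b) ▷ (a ▷ c) = a ▷ (b ▷ c)`: left
self-distributivity, which holds for `a b⁻¹ a` in any group (the core quandle of `Γ`).
-/

/-- `s₁ (a,b,c,d) = (ab⁻¹a, a, c, d)`. -/
def s1 {Γ : Type*} [Group Γ] (p : Γ × Γ × Γ × Γ) : Γ × Γ × Γ × Γ :=
  (p.1 * p.2.1⁻¹ * p.1, p.1, p.2.2.1, p.2.2.2)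

/-- `s₂ (a,b,c,d) = (a, bc⁻¹b, b, d)`. -/
def s2 {Γ : Type*} [Group Γ] (p : Γ × Γ × Γ × Γ) : Γ × Γ × Γ × Γ :=
  (p.1, p.2.1 * p.2.2.1⁻¹ * p.2.1, p.2.1, p.2.2.2)

/-- `s₃ (a,b,c,d) = (a, b, cd⁻¹c, c)`. -/
def s3 {Γ : Type*} [Group Γ] (p : Γ × Γ × Γ × Γ) : Γ × Γ × Γ × Γ :=
  (p.1, p.2.1, p.2.2.1 * p.2.2.2⁻¹ * p.2.2.1, p.2.2.1)

section BraidMoves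

variable {X : Type*} (op : X → X → X)

def braidMove₁ (p : X × X × X × X) : X × X × X × X :=
  (op p.1 p.2.1, p.1, p.2.2.1, p.2.2.2)

def braidMove₂ (p : X × X × X × X) : X × X × X × X :=
  (p.1, op p.2.1 p.2.2.1, p.2.1, p.2.2.2)

def braidMove₃ (p : X × X × X × X) : X × X × X × X :=
  (p.1, p.2.1, op p.2.2.1 p.2.2.2, p.2.2.1)

variable {op}

theorem braidMove₁_braidMove₂_braidMove₁
    (h : ∀ x y z, op x (op y z) = op (op x y) (op x z)) :
    braidMove₁ op ∘ braidMove₂ op ∘ braidMove₁ op =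
      braidMove₂ op ∘ braidMove₁ op ∘ braidMove₂ op := by
  funext ⟨a, b, c, d⟩
  simp only [Function.comp_apply, braidMove₁, braidMove₂, h a b c]

theorem braidMove₂_braidMove₃_braidMove₂
    (h : ∀ x y z, op x (op y z) = op (op x y) (op x z)) :
    braidMove₂ op ∘ braidMove₃ op ∘ braidMove₂ op =
      braidMove₃ op ∘ braidMove₂ op ∘ braidMove₃ op := by
  funext ⟨a, b, c, d⟩
  simp only [Function.comp_apply, braidMove₂, braidMove₃, h b c d]

theorem braidMove₁_comp_braidMove₃ :
    braidMove₁ op ∘ braidMove₃ op = braidMove₃ op ∘ braidMove₁ op :=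
  rfl

end BraidMoves

theorem mul_inv_mul_self_distrib {G : Type*} [Group G] (x y z : G) :
    x * (y * z⁻¹ * y)⁻¹ * x = x * y⁻¹ * x * (x * z⁻¹ * x)⁻¹ * (x * y⁻¹ * x) := by
  group

/-- The maps `s₁, s₂, s₃` on `Γ⁴` satisfy the braid relations. -/
theorem braid_relations_on_fourth_power {Γ : Type*} [Group Γ] :
    (s1 ∘ s2 ∘ s1 = s2 ∘ s1 ∘ s2 (Γ := Γ)) ∧
    (s2 ∘ s3 ∘ s2 = s3 ∘ s2 ∘ s3 (Γ := Γ)) ∧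
    (s1 ∘ s3 = s3 ∘ s1 (Γ := Γ)) := by
  let core : Γ → Γ → Γ := fun a b => a * b⁻¹ * a
  have hcore : ∀ x y z, core x (core y z) = core (core x y) (core x z) :=
    mul_inv_mul_self_distrib
  exact ⟨braidMove₁_braidMove₂_braidMove₁ hcore, braidMove₂_braidMove₃_braidMove₂ hcore,
    braidMove₁_comp_braidMove₃ (op := core)⟩
end

section
/- Let Γ be a group and s₁, s₂, s₃ : Γ⁴ → Γ⁴ the maps s₁(a,b,c,d) = (ab⁻¹a, a, c, d), s₂(a,b,c,d) = (a, bc⁻¹b, b, d), s₃(a,b,c,d) = (a, b, cd⁻¹c, c). Then (s₃ ∘ s₂ ∘ s₁)⁴ maps (a,b,c,d) to (γaδ⁻¹, γbδ⁻¹, γcδ⁻¹, γdδ⁻¹), where γ = ab⁻¹cd⁻¹ and δ = a⁻¹bc⁻¹d. -/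
/-!
One step of `s₃ ∘ s₂ ∘ s₁` sends `(a,b,c,d)` to `(ab⁻¹a, ac⁻¹a, ad⁻¹a, a)`: the cyclically
shifted tuple `(b,c,d,a)`, inverted entrywise and multiplied by `a` on both sides. Composing two
such steps the inversions cancel, so the double step is the shift by two places twisted by
`x ↦ (ab⁻¹) x (b⁻¹a)`. Doing the double step twice, the shift by four places is the identity
and the two twists combine to `x ↦ γ x δ⁻¹`.
-/

section

variable {Γ : Type*} [Group Γ]

theorem s3_comp_s2_comp_s1_apply (a b c d : Γ) :
    (s3 ∘ s2 ∘ s1) (a, b, c, d) = (a * b⁻¹ * a, a * c⁻¹ * a, a * d⁻¹ * a, a) :=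
  rfl

theorem s3_comp_s2_comp_s1_iterate_two_apply (a b c d : Γ) :
    (s3 ∘ s2 ∘ s1)^[2] (a, b, c, d) =
      (a * b⁻¹ * c * (b⁻¹ * a), a * b⁻¹ * d * (b⁻¹ * a),
       a * b⁻¹ * a * (b⁻¹ * a), a * b⁻¹ * b * (b⁻¹ * a)) := by
  rw [Function.iterate_succ_apply', Function.iterate_one, s3_comp_s2_comp_s1_apply,
    s3_comp_s2_comp_s1_apply]
  refine Prod.ext ?_ (Prod.ext ?_ (Prod.ext ?_ ?_)) <;> group

end

/-- The fourth iterate of `s₃ ∘ s₂ ∘ s₁` sends `(a,b,c,d)` to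
`(γaδ⁻¹, γbδ⁻¹, γcδ⁻¹, γdδ⁻¹)` where `γ = ab⁻¹cd⁻¹` and `δ = a⁻¹bc⁻¹d`. -/
theorem center_action {Γ : Type*} [Group Γ] (a b c d : Γ) :
    (s3 ∘ s2 ∘ s1)^[4] (a, b, c, d) =
      ((a * b⁻¹ * c * d⁻¹) * a * (a⁻¹ * b * c⁻¹ * d)⁻¹,
       (a * b⁻¹ * c * d⁻¹) * b * (a⁻¹ * b * c⁻¹ * d)⁻¹,
       (a * b⁻¹ * c * d⁻¹) * c * (a⁻¹ * b * c⁻¹ * d)⁻¹,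
       (a * b⁻¹ * c * d⁻¹) * d * (a⁻¹ * b * c⁻¹ * d)⁻¹) := by
  rw [show 4 = 2 + 2 from rfl, Function.iterate_add_apply,
    s3_comp_s2_comp_s1_iterate_two_apply, s3_comp_s2_comp_s1_iterate_two_apply]
  refine Prod.ext ?_ (Prod.ext ?_ (Prod.ext ?_ ?_)) <;> group
end

section
/- The equivariant quandle on a group Γ is isomorphic to a subquandle of the conjugation quandle of the wreath product Γ ≀ ℤ/2: the subset C = {((a, a⁻¹), ε) : a ∈ Γ} of (Γ × Γ) ⋊ ℤ/2 (ε the nontrivial element acting by swapping coordinates) is closed under conjugation, and the bijection a ↦ ((a,a⁻¹), ε) carries the operation a ◁ b = ab⁻¹a to conjugation: ((a,a⁻¹),ε)((b,b⁻¹),ε)((a,a⁻¹),ε)⁻¹ = ((ab⁻¹a, (ab⁻¹a)⁻¹), ε). -/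
/-- The coordinate-swapping automorphism of `Γ × Γ`. -/
def swapAut (Γ : Type*) [Group Γ] : MulAut (Γ × Γ) :=
  (MulEquiv.prodComm : (Γ × Γ) ≃* (Γ × Γ))

/-- The action of `ℤ/2` on `Γ × Γ` where the non-trivial element swaps the
coordinates. -/
def wreathAction (Γ : Type*) [Group Γ] :
    Multiplicative (ZMod 2) →* MulAut (Γ × Γ) :=
  MonoidHom.mk' (fun x => swapAut Γ ^ (Multiplicative.toAdd x).val) (by
    have h2 : swapAut Γ ^ 2 = 1 := by
      ext x <;> simp [swapAut, pow_succ, MulAut.mul_apply]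
    intro a b
    show swapAut Γ ^ ((Multiplicative.toAdd a + Multiplicative.toAdd b).val) = _
    rw [ZMod.val_add, ← pow_eq_pow_mod _ h2, pow_add])

/-- The non-trivial element `ε` of `ℤ/2`. -/
def epsZ2 : Multiplicative (ZMod 2) := Multiplicative.ofAdd 1

/-- The element `((a, a⁻¹), ε)` of the wreath product `Γ ≀ ℤ/2 = (Γ × Γ) ⋊ ℤ/2`. -/
def elt {Γ : Type*} [Group Γ] (a : Γ) :
    (Γ × Γ) ⋊[wreathAction Γ] Multiplicative (ZMod 2) :=
  ⟨(a, a⁻¹), epsZ2⟩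

/-! An element `((u, v), ε)` squares to `((u v, v u), 1)`, so `C` is exactly the set
of elements lying over `ε` with trivial square. Both conditions are invariant under conjugation
(`ℤ/2` is abelian), which gives closure; the quandle identity is a direct computation once one
notes that `elt a` is an involution. -/

section

variable {Γ : Type*} [Group Γ]

theorem wreathAction_epsZ2_apply (p : Γ × Γ) : wreathAction Γ epsZ2 p = p.swap := rfl

theorem epsZ2_mul_self : epsZ2 * epsZ2 = 1 := rfl

theorem mul_self_eq_inl_of_right_eq_epsZ2 {x : (Γ × Γ) ⋊[wreathAction Γ] Multiplicative (ZMod 2)}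
    (hx : x.right = epsZ2) :
    x * x = SemidirectProduct.inl (x.left.1 * x.left.2, x.left.2 * x.left.1) := by
  ext <;> simp [hx, wreathAction_epsZ2_apply, epsZ2_mul_self]

theorem elt_mul_self (a : Γ) : elt a * elt a = 1 := by
  rw [mul_self_eq_inl_of_right_eq_epsZ2 rfl]
  simp only [elt, mul_inv_cancel, inv_mul_cancel, Prod.mk_one_one, map_one]

theorem elt_inv (a : Γ) : (elt a)⁻¹ = elt a :=
  inv_eq_of_mul_eq_one_right (elt_mul_self a)

theorem elt_mul_elt_mul_elt_self (a b : Γ) : elt a * elt b * elt a = elt (a * b⁻¹ * a) := by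
  ext <;> simp [elt, wreathAction_epsZ2_apply, epsZ2_mul_self, mul_assoc]

theorem mem_range_elt_iff {x : (Γ × Γ) ⋊[wreathAction Γ] Multiplicative (ZMod 2)} :
    x ∈ Set.range (elt (Γ := Γ)) ↔ x.right = epsZ2 ∧ x * x = 1 := by
  refine ⟨?_, fun ⟨hx, hsq⟩ => ⟨x.left.1, ?_⟩⟩
  · rintro ⟨a, rfl⟩
    exact ⟨rfl, elt_mul_self a⟩
  · rw [mul_self_eq_inl_of_right_eq_epsZ2 hx] at hsq
    have huv : x.left.1 * x.left.2 = 1 := congrArg Prod.fst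
      (SemidirectProduct.inl_injective (hsq.trans (map_one _).symm))
    ext
    · rfl
    · exact (eq_inv_of_mul_eq_one_right huv).symm
    · exact hx.symm

theorem conj_mem_range_elt (g : (Γ × Γ) ⋊[wreathAction Γ] Multiplicative (ZMod 2)) {x}
    (hx : x ∈ Set.range (elt (Γ := Γ))) : g * x * g⁻¹ ∈ Set.range (elt (Γ := Γ)) := by
  obtain ⟨hright, hsq⟩ := mem_range_elt_iff.1 hx
  refine mem_range_elt_iff.2 ⟨?_, ?_⟩
  · simp [hright, mul_comm g.right]
  · rw [conj_mul, hsq, mul_one, mul_inv_cancel]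

end

/-- The subset `C = {((a, a⁻¹), ε) : a ∈ Γ}` of the wreath product
`Γ ≀ ℤ/2 = (Γ × Γ) ⋊ ℤ/2` is closed under conjugation, and conjugation within `C`
realizes the equivariant quandle operation `a ◁ b = a b⁻¹ a`:
`((a,a⁻¹),ε) ((b,b⁻¹),ε) ((a,a⁻¹),ε)⁻¹ = ((ab⁻¹a, (ab⁻¹a)⁻¹), ε)`. -/
theorem equivariant_quandle_as_conjugation_quandle {Γ : Type*} [Group Γ] :
    (∀ (g : (Γ × Γ) ⋊[wreathAction Γ] Multiplicative (ZMod 2)) (x),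
      x ∈ Set.range (elt (Γ := Γ)) → g * x * g⁻¹ ∈ Set.range (elt (Γ := Γ))) ∧
    (∀ a b : Γ, elt a * elt b * (elt a)⁻¹ = elt (a * b⁻¹ * a)) :=
  ⟨fun g _ hx => conj_mem_range_elt g hx, fun a b => by rw [elt_inv, elt_mul_elt_mul_elt_self]⟩
end

section
/- Let M₁, M₂, M₃ ∈ SL₂(F) over a field F, and set a = tr(M₁), b = tr(M₂), c = tr(M₃), x = tr(M₂M₃), y = tr(M₃M₁), z = tr(M₁M₂), p = tr(M₁M₂M₃). Then p² − (ax + by + cz − abc)p + (a² + b² + c² + x² + y² + z² + xyz − abz − bcx − cay − 4) = 0. -/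
/-!
With `p = tr(M₁M₂M₃)` and `q = tr(M₁M₃M₂)`, the claimed polynomial is `(T - p)(T - q)` evaluated
at `T = p`: for arbitrary `2 × 2` matrices, `p + q = ax + by + cz - abc` (polarized
Cayley–Hamilton), and `pq` is a polynomial in `a, b, c, x, y, z` and the three determinants,
which on `SL₂` becomes the constant term.
-/

namespace Matrix

variable {R : Type*} [CommRing R]

theorem trace_mul_mul_add_trace_mul_mul_fin_two (A B C : Matrix (Fin 2) (Fin 2) R) :
    trace (A * B * C) + trace (A * C * B) =
      trace A * trace (B * C) + trace B * trace (C * A) + trace C * trace (A * B) -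
        trace A * trace B * trace C := by
  simp only [trace_fin_two, mul_apply, Fin.sum_univ_two]
  ring

theorem trace_mul_mul_mul_trace_mul_mul_fin_two (A B C : Matrix (Fin 2) (Fin 2) R) :
    trace (A * B * C) * trace (A * C * B) =
      trace A ^ 2 * B.det * C.det + trace B ^ 2 * C.det * A.det + trace C ^ 2 * A.det * B.det +
        trace (B * C) ^ 2 * A.det + trace (C * A) ^ 2 * B.det + trace (A * B) ^ 2 * C.det +
        trace (B * C) * trace (C * A) * trace (A * B) -
        trace A * trace B * trace (A * B) * C.det - trace B * trace C * trace (B * C) * A.det -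
        trace C * trace A * trace (C * A) * B.det - 4 * A.det * B.det * C.det := by
  simp only [trace_fin_two, det_fin_two, mul_apply, Fin.sum_univ_two]
  ring

theorem SpecialLinearGroup.trace_mul_mul_mul_trace_mul_mul_fin_two
    (A B C : SpecialLinearGroup (Fin 2) R) :
    trace (A * B * C : SpecialLinearGroup (Fin 2) R).val *
        trace (A * C * B : SpecialLinearGroup (Fin 2) R).val =
      trace A.val ^ 2 + trace B.val ^ 2 + trace C.val ^ 2 +
        trace (B * C).val ^ 2 + trace (C * A).val ^ 2 + trace (A * B).val ^ 2 +
        trace (B * C).val * trace (C * A).val * trace (A * B).val -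
        trace A.val * trace B.val * trace (A * B).val -
        trace B.val * trace C.val * trace (B * C).val -
        trace C.val * trace A.val * trace (C * A).val - 4 := by
  simpa only [SpecialLinearGroup.coe_mul, SpecialLinearGroup.det_coe, mul_one]
    using Matrix.trace_mul_mul_mul_trace_mul_mul_fin_two A.val B.val C.val

end Matrix

/-- The Fricke trace identity for a triple `M₁, M₂, M₃ ∈ SL₂(F)`:
with `a = tr M₁`, `b = tr M₂`, `c = tr M₃`, `x = tr(M₂M₃)`, `y = tr(M₃M₁)`,
`z = tr(M₁M₂)` and `p = tr(M₁M₂M₃)`, one has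
`p² − (ax+by+cz−abc)p + (a²+b²+c²+x²+y²+z²+xyz−abz−bcx−cay−4) = 0`. -/
theorem fricke_identity {F : Type*} [Field F]
    (M₁ M₂ M₃ : Matrix.SpecialLinearGroup (Fin 2) F) :
    let a := Matrix.trace M₁.val
    let b := Matrix.trace M₂.val
    let c := Matrix.trace M₃.val
    let x := Matrix.trace (M₂ * M₃).val
    let y := Matrix.trace (M₃ * M₁).val
    let z := Matrix.trace (M₁ * M₂).val
    let p := Matrix.trace (M₁ * M₂ * M₃).val
    p ^ 2 - (a * x + b * y + c * z - a * b * c) * p +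
      (a ^ 2 + b ^ 2 + c ^ 2 + x ^ 2 + y ^ 2 + z ^ 2 + x * y * z -
        a * b * z - b * c * x - c * a * y - 4) = 0 := by
  intro a b c x y z p
  have hsum := Matrix.trace_mul_mul_add_trace_mul_mul_fin_two M₁.val M₂.val M₃.val
  have hprod := Matrix.SpecialLinearGroup.trace_mul_mul_mul_trace_mul_mul_fin_two M₁ M₂ M₃
  simp only [Matrix.SpecialLinearGroup.coe_mul] at hsum hprod ⊢
  linear_combination p * hsum - hprod
end

section
/- Let p be a prime and let A, B ∈ SL₂(𝔽_p) be such that their images generate PSL₂(𝔽_p). If Ã, B̃ ∈ SL₂(𝔽_p) satisfy tr(w(Ã,B̃)) = tr(w(A,B)) for every word w in the free group F₂ (equivalently tr(Ã)=tr(A), tr(B̃)=tr(B), tr(ÃB̃)=tr(AB) suffice), then there exists g ∈ GL₂(𝔽_p) with gÃg⁻¹ = A and gB̃g⁻¹ = B. -/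
/-!
Extend a representation `ρ : G →* Matrix n n K` to the group algebra. The character of `ρ`
determines the form `(x, y) ↦ tr (ρ x * ρ y)` there, and when `ρ` is onto the trace pairing on
matrices is nondegenerate, so the kernel of `ρ` contains the kernel of every `ρ'` with the same
character. A dimension count makes such a `ρ'` onto as well, so `ρ' x ↦ ρ x` is a well-defined
automorphism of the matrix algebra, which is inner by Skolem–Noether.

In `SL₂(𝔽_p)`, a subgroup mapping onto `PSL₂(𝔽_p)` meets every element up to a scalar `±1`,
so it spans the same space as `SL₂(𝔽_p)`, which is all of `M₂(𝔽_p)`.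
-/

open Matrix MatrixGroups

theorem LinearMap.surjective_of_ker_le_ker {K V W : Type*} [Field K] [AddCommGroup V]
    [Module K V] [AddCommGroup W] [Module K W] [FiniteDimensional K W] {f g : V →ₗ[K] W}
    (hf : Function.Surjective f) (hker : ker g ≤ ker f) : Function.Surjective g := by
  let b := Module.finBasis K W
  choose x hx using fun i => hf (b i)
  have hind : LinearIndependent K (g ∘ x) := by
    rw [Fintype.linearIndependent_iff]
    intro c hc
    have hfc := hker (show ∑ i, c i • x i ∈ ker g by simpa [mem_ker] using hc)
    simp only [mem_ker, map_sum, map_smul, hx] at hfc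
    exact Fintype.linearIndependent_iff.mp b.linearIndependent c hfc
  rw [← range_eq_top, eq_top_iff, ← hind.span_eq_top_of_card_eq_finrank' (by simp),
    Submodule.span_le]
  rintro _ ⟨i, rfl⟩
  exact ⟨x i, rfl⟩

theorem AlgHom.exists_algEquiv_of_ker_eq {R A B C : Type*} [CommRing R] [Ring A] [Algebra R A]
    [Ring B] [Algebra R B] [Ring C] [Algebra R C] {f : A →ₐ[R] B} {f' : A →ₐ[R] C}
    (hf : Function.Surjective f) (hf' : Function.Surjective f')
    (hker : RingHom.ker f' = RingHom.ker f) : ∃ Φ : C ≃ₐ[R] B, ∀ x, Φ (f' x) = f x := by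
  refine ⟨(Ideal.quotientKerAlgEquivOfSurjective hf').symm.trans
    ((Ideal.quotientEquivAlgOfEq R hker).trans (Ideal.quotientKerAlgEquivOfSurjective hf)),
    fun x => ?_⟩
  rw [AlgEquiv.trans_apply, AlgEquiv.trans_apply,
    Ideal.quotientKerAlgEquivOfSurjective_symm_apply]
  rfl

namespace Matrix

variable {K n : Type*} [Field K] [Fintype n] [DecidableEq n]

theorem exists_eq_conj_of_algEquiv (Φ : Matrix n n K ≃ₐ[K] Matrix n n K) :
    ∃ P : GL n K, ∀ X, Φ X = P * X * (P⁻¹ : GL n K) := by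
  obtain ⟨T, hT⟩ :=
    (toLinAlgEquiv'.symm.trans (Φ.trans toLinAlgEquiv')).eq_linearEquivConjAlgEquiv
  refine ⟨Units.map toLinAlgEquiv'.symm.toMonoidHom (LinearMap.GeneralLinearGroup.ofLinearEquiv T),
    fun X => ?_⟩
  have := congrArg toLinAlgEquiv'.symm (DFunLike.congr_fun hT (toLinAlgEquiv' X))
  simp only [AlgEquiv.trans_apply, AlgEquiv.symm_apply_apply, LinearEquiv.conjAlgEquiv_apply,
    ← Module.End.mul_eq_comp, map_mul, ← mul_assoc] at this
  exact this

theorem ker_le_ker_of_trace_eq {A : Type*} [Ring A] [Algebra K A] {f f' : A →ₐ[K] Matrix n n K}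
    (hf : Function.Surjective f) (htr : ∀ x, trace (f' x) = trace (f x)) :
    RingHom.ker f' ≤ RingHom.ker f := by
  intro x hx
  rw [RingHom.mem_ker] at hx ⊢
  refine ext_iff_trace_mul_right.mpr fun Y => ?_
  obtain ⟨y, rfl⟩ := hf Y
  rw [← map_mul, ← htr, map_mul, hx, zero_mul, zero_mul]

theorem exists_conj_of_trace_eq {G : Type*} [Monoid G] (ρ ρ' : G →* Matrix n n K)
    (hρ : Submodule.span K (Set.range ρ) = ⊤) (htr : ∀ g, trace (ρ' g) = trace (ρ g)) :
    ∃ P : GL n K, ∀ g, P * ρ' g * (P⁻¹ : GL n K) = ρ g := by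
  let f := MonoidAlgebra.lift K (Matrix n n K) G ρ
  let f' := MonoidAlgebra.lift K (Matrix n n K) G ρ'
  have htr' : ∀ x, trace (f' x) = trace (f x) := by
    intro x
    induction x using MonoidAlgebra.induction_linear with
    | zero => simp
    | add x y hx hy => rw [map_add, map_add, trace_add, trace_add, hx, hy]
    | single g r => simp [f, f', MonoidAlgebra.lift_single, htr]
  have hf : Function.Surjective f := by
    rw [← AlgHom.coe_toLinearMap, ← LinearMap.range_eq_top, eq_top_iff, ← hρ, Submodule.span_le]
    rintro _ ⟨g, rfl⟩
    exact ⟨MonoidAlgebra.single g 1, by simp [f, MonoidAlgebra.lift_single]⟩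
  have hf' : Function.Surjective f' :=
    LinearMap.surjective_of_ker_le_ker (f := f.toLinearMap) (g := f'.toLinearMap) hf
      fun x hx => ker_le_ker_of_trace_eq hf htr' hx
  obtain ⟨Φ, hΦ⟩ := AlgHom.exists_algEquiv_of_ker_eq hf hf' <|
    le_antisymm (ker_le_ker_of_trace_eq hf htr')
      (ker_le_ker_of_trace_eq hf' fun x => (htr' x).symm)
  obtain ⟨P, hP⟩ := exists_eq_conj_of_algEquiv Φ
  refine ⟨P, fun g => ?_⟩
  rw [← hP]
  simpa [f, f', MonoidAlgebra.lift_single] using hΦ (.single g 1)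

end Matrix

namespace Matrix.SpecialLinearGroup

theorem span_range_coe_fin_two (R : Type*) [CommRing R] :
    Submodule.span R (Set.range ((↑) : SL(2, R) → Matrix (Fin 2) (Fin 2) R)) = ⊤ := by
  set S := Submodule.span R (Set.range ((↑) : SL(2, R) → Matrix (Fin 2) (Fin 2) R))
  have mem (s : SL(2, R)) : (s : Matrix (Fin 2) (Fin 2) R) ∈ S := Submodule.subset_span ⟨s, rfl⟩
  let U : SL(2, R) := ⟨!![1, 1; 0, 1], by simp⟩
  let L : SL(2, R) := ⟨!![1, 0; 1, 1], by simp⟩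
  refine eq_top_iff.mpr fun X _ => ?_
  -- the matrix units are `U * L - U - L + 1`, `U - 1`, `L - 1` and `U + L - U * L`
  have hX : X = (X 0 0 - X 1 1) • ((U * L : SL(2, R)) : Matrix (Fin 2) (Fin 2) R)
      + (X 0 1 - X 0 0 + X 1 1) • (U : Matrix (Fin 2) (Fin 2) R)
      + (X 1 0 - X 0 0 + X 1 1) • (L : Matrix (Fin 2) (Fin 2) R)
      + (X 0 0 - X 0 1 - X 1 0) • ((1 : SL(2, R)) : Matrix (Fin 2) (Fin 2) R) := by
    rw [coe_mul]
    ext i j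
    fin_cases i <;> fin_cases j <;> simp [U, L] <;> ring
  rw [hX]
  exact add_mem (add_mem (add_mem (S.smul_mem _ (mem _)) (S.smul_mem _ (mem _)))
    (S.smul_mem _ (mem _))) (S.smul_mem _ (mem _))

theorem span_image_coe_eq_of_map_mk_eq_top {n R : Type*} [Fintype n] [DecidableEq n] [CommRing R]
    {H : Subgroup (SpecialLinearGroup n R)}
    (hH : H.map (QuotientGroup.mk' (Subgroup.center (SpecialLinearGroup n R))) = ⊤) :
    Submodule.span R (((↑) : SpecialLinearGroup n R → Matrix n n R) ''
        (H : Set (SpecialLinearGroup n R))) =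
      Submodule.span R (Set.range ((↑) : SpecialLinearGroup n R → Matrix n n R)) := by
  refine le_antisymm (Submodule.span_mono (Set.image_subset_range _ _)) (Submodule.span_le.mpr ?_)
  rintro _ ⟨s, rfl⟩
  obtain ⟨h, hh, hhs⟩ := Subgroup.mem_map.mp (hH ▸ Subgroup.mem_top
    (QuotientGroup.mk' (Subgroup.center (SpecialLinearGroup n R)) s))
  obtain ⟨z, hz, rfl⟩ := (QuotientGroup.mk'_eq_mk' _).mp hhs
  obtain ⟨r, -, hrz⟩ := mem_center_iff.mp hz
  have hhz : ((h * z : SpecialLinearGroup n R) : Matrix n n R) = r • (h : Matrix n n R) := by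
    rw [coe_mul, ← hrz, scalar_apply, ← smul_one_eq_diagonal, mul_smul_comm, mul_one]
  rw [SetLike.mem_coe, hhz]
  exact Submodule.smul_mem _ _ (Submodule.subset_span ⟨h, hh, rfl⟩)

end Matrix.SpecialLinearGroup

/-- Let `A, B ∈ SL₂(𝔽_p)` whose images generate `PSL₂(𝔽_p)` (the quotient of
`SL₂(𝔽_p)` by its center). If `Ã, B̃ ∈ SL₂(𝔽_p)` give the same trace on every word
`w ∈ F₂`, then some `g ∈ GL₂(𝔽_p)` simultaneously conjugates `(Ã, B̃)` to `(A, B)`. -/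
theorem pairs_determined_by_character (p : ℕ) [Fact p.Prime]
    (A B A' B' : Matrix.SpecialLinearGroup (Fin 2) (ZMod p))
    (hgen : Subgroup.closure
      ({QuotientGroup.mk' (Subgroup.center (Matrix.SpecialLinearGroup (Fin 2) (ZMod p))) A,
        QuotientGroup.mk' (Subgroup.center (Matrix.SpecialLinearGroup (Fin 2) (ZMod p))) B} :
        Set (Matrix.SpecialLinearGroup (Fin 2) (ZMod p) ⧸
          Subgroup.center (Matrix.SpecialLinearGroup (Fin 2) (ZMod p)))) = ⊤)
    (htr : ∀ w : FreeGroup (Fin 2),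
      Matrix.trace (FreeGroup.lift (fun i => if i = 0 then A' else B') w).val =
        Matrix.trace (FreeGroup.lift (fun i => if i = 0 then A else B) w).val) :
    ∃ g : Matrix.GeneralLinearGroup (Fin 2) (ZMod p),
      g.val * A'.val * (g⁻¹).val = A.val ∧ g.val * B'.val * (g⁻¹).val = B.val := by
  let a : Fin 2 → SL(2, ZMod p) := fun i => if i = 0 then A else B
  let a' : Fin 2 → SL(2, ZMod p) := fun i => if i = 0 then A' else B'
  let ρ := SpecialLinearGroup.coeMonoidHom.comp (FreeGroup.lift a)
  let ρ' := SpecialLinearGroup.coeMonoidHom.comp (FreeGroup.lift a')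
  have hmap : (FreeGroup.lift a).range.map (QuotientGroup.mk' (Subgroup.center _)) = ⊤ := by
    have hrange : Set.range a = {A, B} := by ext; simp [a, Fin.exists_fin_two, eq_comm]
    rw [FreeGroup.range_lift_eq_closure, MonoidHom.map_closure, hrange, Set.image_pair, hgen]
  have hspan : Submodule.span (ZMod p) (Set.range ρ) = ⊤ := by
    rw [MonoidHom.coe_comp, Set.range_comp, ← MonoidHom.coe_range]
    exact (SpecialLinearGroup.span_image_coe_eq_of_map_mk_eq_top hmap).trans
      (SpecialLinearGroup.span_range_coe_fin_two _)
  obtain ⟨P, hP⟩ := exists_conj_of_trace_eq ρ ρ' hspan htr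
  exact ⟨P, by simpa [ρ, ρ', a, a'] using hP (.of 0), by simpa [ρ, ρ', a, a'] using hP (.of 1)⟩
end

section
/- Let U, V be finite-dimensional vector spaces over a field k, W = End(U ⊕ V), and let W⁺ ≤ W be the subspace of endomorphisms whose component in Hom(V, U) is zero (block lower-triangular with respect to the decomposition, i.e. maps sending U into U). Let A ∈ GL(U ⊕ V). If A · Hom(U, V) · A⁻¹ ⊆ W⁺ (where Hom(U,V) is embedded in W as block matrices), then A ∈ W⁺; in particular A preserves the subspace U. -/
/-- An endomorphism of `U ⊕ V` lies in `W⁺` iff its component in `Hom(V, U)`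
(the "upper-right block") vanishes. -/
def inWplus {k U V : Type*} [Field k] [AddCommGroup U] [Module k U]
    [AddCommGroup V] [Module k V] (f : (U × V) →ₗ[k] (U × V)) : Prop :=
  ∀ v : V, (f (0, v)).1 = 0

/-- The embedding of `Hom(U, V)` into `End(U ⊕ V)` as the "lower-left block". -/
def embedHom {k U V : Type*} [Field k] [AddCommGroup U] [Module k U]
    [AddCommGroup V] [Module k V] (g : U →ₗ[k] V) : (U × V) →ₗ[k] (U × V) :=
  (LinearMap.inr k U V).comp (g.comp (LinearMap.fst k U V))

/-!
If `A⁻¹` moved some `(0, v)` off `{0} × V`, say to a point with first component `u ≠ 0`, then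
choosing `g` with `g u = v'` shows that the conjugate `A g A⁻¹` sends `(0, v)` to `A (0, v')`,
which must therefore lie in `{0} × V`; so `A` preserves `{0} × V` anyway. Otherwise `A⁻¹`
preserves the finite-dimensional subspace `{0} × V`, hence maps it onto itself, and so does `A`.
-/

theorem LinearEquiv.map_symm_le_of_map_le {K M : Type*} [DivisionRing K] [AddCommGroup M]
    [Module K M] (e : M ≃ₗ[K] M) {P : Submodule K M} [FiniteDimensional K P]
    (h : P.map e.toLinearMap ≤ P) : P.map e.symm.toLinearMap ≤ P := by
  have hP : P.map e.toLinearMap = P := Submodule.eq_of_le_of_finrank_le h (e.finrank_map_eq P).ge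
  exact ((Submodule.map_symm_eq_iff e).mpr hP).le

section BlockTriangular

variable {k U V : Type*} [Field k] [AddCommGroup U] [Module k U] [AddCommGroup V] [Module k V]

theorem inWplus_iff_map_range_inr_le (f : (U × V) →ₗ[k] (U × V)) :
    inWplus f ↔
      (LinearMap.range (LinearMap.inr k U V)).map f ≤ LinearMap.range (LinearMap.inr k U V) := by
  rw [Submodule.map_le_iff_le_comap, LinearMap.range_le_iff_comap, Submodule.eq_top_iff']
  simp [inWplus, ← LinearMap.ker_fst]

theorem inWplus_of_inWplus_symm [FiniteDimensional k V] (A : (U × V) ≃ₗ[k] (U × V))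
    (hA : inWplus A.symm.toLinearMap) : inWplus A.toLinearMap := by
  rw [inWplus_iff_map_range_inr_le] at hA ⊢
  simpa using A.symm.map_symm_le_of_map_le hA

theorem inWplus_or_inWplus_of_forall_inWplus_comp_embedHom_comp
    (f f' : (U × V) →ₗ[k] (U × V))
    (h : ∀ g : U →ₗ[k] V, inWplus ((f.comp (embedHom g)).comp f')) :
    inWplus f ∨ inWplus f' := by
  refine or_iff_not_imp_right.mpr fun hf' v₀ => ?_
  obtain ⟨v, hv⟩ := not_forall.mp hf'
  obtain ⟨g, -, hg⟩ := LinearMap.exists_extend_of_notMem (0 : (⊥ : Submodule k U) →ₗ[k] V)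
    (Submodule.mem_bot k |>.not.mpr hv) v₀
  simpa [embedHom, hg] using h g v

end BlockTriangular

theorem parabolic_normalizer_general {k U V : Type*} [Field k]
    [AddCommGroup U] [Module k U] [AddCommGroup V] [Module k V]
    [FiniteDimensional k V]
    (A : (U × V) ≃ₗ[k] (U × V))
    (h : ∀ g : U →ₗ[k] V,
      inWplus ((A.toLinearMap.comp (embedHom g)).comp A.symm.toLinearMap)) :
    inWplus A.toLinearMap :=
  (inWplus_or_inWplus_of_forall_inWplus_comp_embedHom_comp _ _ h).elim id
    (inWplus_of_inWplus_symm A)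

/-- Let `U, V` be nonzero finite-dimensional vector spaces over a field `k`, and let
`A ∈ GL(U ⊕ V)`. If `A · Hom(U, V) · A⁻¹ ⊆ W⁺`, where `W⁺` consists of the
endomorphisms of `U ⊕ V` with vanishing `Hom(V, U)`-component, then `A ∈ W⁺`. -/
theorem parabolic_normalizer {k U V : Type*} [Field k]
    [AddCommGroup U] [Module k U] [AddCommGroup V] [Module k V]
    [FiniteDimensional k U] [FiniteDimensional k V]
    (hU : 1 ≤ Module.finrank k U) (hV : 1 ≤ Module.finrank k V)
    (A : (U × V) ≃ₗ[k] (U × V))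
    (h : ∀ g : U →ₗ[k] V,
      inWplus ((A.toLinearMap.comp (embedHom g)).comp A.symm.toLinearMap)) :
    inWplus A.toLinearMap :=
  parabolic_normalizer_general A h
end
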